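/- Fix r ∈ (0,1), a stationary state x of the recombinator dynamics, and a trait a_d with x(a_d) = 0. Then the system of equations η(a_{-d}) = (1−r)·η(a_{-d})·u_x(a_d,a_{-d}) / (Σ_{a'_{-d}} η(a'_{-d}) u_x(a_d,a'_{-d})) + r·∏_{d'≠d} x(a_{d'}), for a_{-d} ∈ supp_{-d}(x), admits a unique solution η in the probability simplex Δ(supp_{-d}(x)). -/

import Mathlib

open Finset

noncomputable section

variable {D : Type*} [Fintype D] [DecidableEq D] {A : D → Type*}
  [∀ d, Fintype (A d)] [∀ d, DecidableEq (A d)]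

/-- payoff of type `a` at state `x`: `u_x(a) = ∑ a', x(a') u(a,a')`. -/
def typePay (u : (∀ d, A d) → (∀ d, A d) → ℝ) (x : (∀ d, A d) → ℝ) (a : ∀ d, A d) : ℝ :=
  ∑ a', x a' * u a a'

/-- mean payoff `u_x`. -/
def meanPay (u : (∀ d, A d) → (∀ d, A d) → ℝ) (x : (∀ d, A d) → ℝ) : ℝ :=
  ∑ a, x a * typePay u x a

/-- marginal frequency `x(a_d)` of trait `t` in dimension `d`. -/
def marg (x : (∀ d, A d) → ℝ) (d : D) (t : A d) : ℝ :=
  ∑ a, if a d = t then x a else 0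

/-- marginal trait payoff `u_x(a_d)` (0 by div-by-zero convention when `x(a_d)=0`). -/
def traitPay (u : (∀ d, A d) → (∀ d, A d) → ℝ) (x : (∀ d, A d) → ℝ) (d : D) (t : A d) : ℝ :=
  (∑ a, if a d = t then x a * typePay u x a else 0) / marg x d t

/-- the recombinator vector field `ẋ(a)` with recombination rate `r`. -/
def recomb (u : (∀ d, A d) → (∀ d, A d) → ℝ) (x : (∀ d, A d) → ℝ) (r : ℝ) (a : ∀ d, A d) : ℝ :=
  (1 - r) * x a * typePay u x a / meanPay u x
    + r * ∏ d, (marg x d (a d) * traitPay u x d (a d) / meanPay u x)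
    - x a

/-- the trait-to-type ratio `m_x(a)`. -/
def ttRatio (x : (∀ d, A d) → ℝ) (a : ∀ d, A d) : ℝ :=
  (∏ d, marg x d (a d)) / x a

/-- the `r`-payoff `z^r_x(a)`. -/
def rPay (u : (∀ d, A d) → (∀ d, A d) → ℝ) (x : (∀ d, A d) → ℝ) (r : ℝ) (a : ∀ d, A d) : ℝ :=
  (1 - r) * typePay u x a / meanPay u x
    + r * ttRatio x a * ∏ d, (traitPay u x d (a d) / meanPay u x)

/-- glue a trait `t` in dimension `d` with a partner profile `p` on the other
dimensions, producing a full type `(a_d, a_{-d})`. -/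
def glue (d : D) (t : A d) (p : ∀ d' : {d' : D // d' ≠ d}, A d') : ∀ d', A d' :=
  fun d' => if h : d' = d then h.symm ▸ t else p ⟨d', h⟩

/-!
Off the support, stationarity forces `π_p = ∏_{d' ≠ d} x(a_{d'})` to vanish: an absent type
receives no recombinant offspring, so one of its traits is absent. Hence `π` is a probability
vector on the support. With `c_p = u_x(a_d, p)` and `L = ∑ η c`, the equation reads
`η_p = r π_p / (1 - (1 - r) c_p / L)`, so a solution is determined by `s = 1 / L`, which must
solve `∑ r π_p / (1 - (1 - r) c_p s) = 1`. The left side increases strictly from `r < 1` and blows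
up before `s` reaches `min_p 1 / ((1 - r) c_p)`, so exactly one such `s` exists.
-/

lemma Finset.exists_pos_of_sum_pos {ι M : Type*} [AddCommMonoid M] [LinearOrder M] [AddLeftMono M]
    {s : Finset ι} {f : ι → M} (h : 0 < ∑ i ∈ s, f i) : ∃ i ∈ s, 0 < f i :=
  exists_lt_of_sum_lt (f := 0) (by simpa using h)

section Scalar

variable {ι : Type*} {S : Finset ι} {w b : ι → ℝ}

lemma sum_div_one_sub_mul_lt_of_lt (hS : S.Nonempty) (hw : ∀ i ∈ S, 0 < w i)
    (hb : ∀ i ∈ S, 0 < b i) {s s' : ℝ} (hss' : s < s') (hs' : ∀ i ∈ S, b i * s' < 1) :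
    ∑ i ∈ S, w i / (1 - b i * s) < ∑ i ∈ S, w i / (1 - b i * s') :=
  sum_lt_sum_of_nonempty hS fun i hi =>
    div_lt_div_of_pos_left (hw i hi) (by linarith [hs' i hi])
      (by nlinarith [hb i hi])

/-- Intermediate value theorem on `[0, (1 - w k) / b k]`, where `k` maximises `b`: there every
denominator is at least `w k`, and the `k`-th summand alone reaches `1`. -/
lemma exists_sum_div_one_sub_mul_eq_one (hS : S.Nonempty) (hw : ∀ i ∈ S, 0 < w i)
    (hb : ∀ i ∈ S, 0 < b i) (hwS : ∑ i ∈ S, w i < 1) :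
    ∃ s, 0 < s ∧ (∀ i ∈ S, b i * s < 1) ∧ ∑ i ∈ S, w i / (1 - b i * s) = 1 := by
  obtain ⟨k, hk, hbk⟩ := S.exists_max_image b hS
  have hwk : w k < 1 := (single_le_sum (fun i hi => (hw i hi).le) hk).trans_lt hwS
  have hbm : b k * ((1 - w k) / b k) = 1 - w k := mul_div_cancel₀ _ (hb k hk).ne'
  have hm : 0 < (1 - w k) / b k := div_pos (by linarith) (hb k hk)
  have hden : ∀ i ∈ S, ∀ s ∈ Set.Icc 0 ((1 - w k) / b k), w k ≤ 1 - b i * s := by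
    intro i hi s hs
    have := mul_le_mul (hbk i hi) hs.2 hs.1 (hb k hk).le
    linarith
  have hcont : ContinuousOn (fun s => ∑ i ∈ S, w i / (1 - b i * s))
      (Set.Icc 0 ((1 - w k) / b k)) :=
    continuousOn_finsetSum S fun i hi => continuousOn_const.div (by fun_prop)
      fun s hs => ((hw k hk).trans_le (hden i hi s hs)).ne'
  have h0 : ∑ i ∈ S, w i / (1 - b i * 0) < 1 := by simpa using hwS
  have hm1 : 1 ≤ ∑ i ∈ S, w i / (1 - b i * ((1 - w k) / b k)) := calc
    1 = w k / (1 - b k * ((1 - w k) / b k)) := by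
      rw [hbm, sub_sub_cancel, div_self (hw k hk).ne']
    _ ≤ _ := single_le_sum (f := fun i => w i / (1 - b i * ((1 - w k) / b k)))
      (fun i hi => div_nonneg (hw i hi).le
        ((hw k hk).le.trans (hden i hi _ ⟨hm.le, le_rfl⟩))) hk
  obtain ⟨s, hs, hs1⟩ := intermediate_value_Icc hm.le hcont ⟨h0.le, hm1⟩
  refine ⟨s, hs.1.lt_of_ne ?_, fun i hi => by linarith [hden i hi s hs, hw k hk], hs1⟩
  rintro rfl
  exact h0.ne hs1

lemma existsUnique_sum_div_one_sub_mul_eq_one (hS : S.Nonempty) (hw : ∀ i ∈ S, 0 < w i)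
    (hb : ∀ i ∈ S, 0 < b i) (hwS : ∑ i ∈ S, w i < 1) :
    ∃! s, 0 < s ∧ (∀ i ∈ S, b i * s < 1) ∧ ∑ i ∈ S, w i / (1 - b i * s) = 1 := by
  obtain ⟨s, hs⟩ := exists_sum_div_one_sub_mul_eq_one hS hw hb hwS
  refine ⟨s, hs, fun s' hs' => ?_⟩
  rcases lt_trichotomy s' s with h | h | h
  · exact absurd (sum_div_one_sub_mul_lt_of_lt hS hw hb h hs.2.1) (by rw [hs.2.2, hs'.2.2]; simp)
  · exact h
  · exact absurd (sum_div_one_sub_mul_lt_of_lt hS hw hb h hs'.2.1) (by rw [hs.2.2, hs'.2.2]; simp)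

end Scalar

section StableDistribution

variable {ι : Type*} [Fintype ι] (P : ι → Prop) [DecidablePred P] (π c : ι → ℝ) (r : ℝ)

/-- `P` stands for `supp_{-d}(x)`, `π` for `∏_{d' ≠ d} x(a_{d'})` and `c` for `u_x(a_d, ·)`. -/
def IsStableDistribution (η : ι → ℝ) : Prop :=
  (∀ i, 0 ≤ η i) ∧ (∑ i, η i = 1) ∧ (∀ i, ¬ P i → η i = 0) ∧
    ∀ i, P i → η i = (1 - r) * η i * c i / (∑ j, if P j then η j * c j else 0) + r * π i

/-- The solution of the fixed-point equation for `η i` once `∑ j, η j * c j` is fixed to `1 / s`. -/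
def distributionOfScale (s : ℝ) (i : ι) : ℝ :=
  if P i then r * π i / (1 - (1 - r) * c i * s) else 0

variable {P π c r}

lemma isStableDistribution_distributionOfScale (hπ : ∀ i, P i → 0 ≤ π i)
    (hπsum : ∑ i with P i, π i = 1) (hr0 : 0 ≤ r) (hr1 : r < 1) {s : ℝ}
    (hden : ∀ i ∈ univ.filter P, (1 - r) * c i * s < 1)
    (hsum : ∑ i ∈ univ.filter P, r * π i / (1 - (1 - r) * c i * s) = 1) :
    IsStableDistribution P π c r (distributionOfScale P π c r s) := by
  set η := distributionOfScale P π c r s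
  have hden' : ∀ i, P i → 0 < 1 - (1 - r) * c i * s := fun i hi =>
    sub_pos.2 (hden i (mem_filter.2 ⟨mem_univ i, hi⟩))
  have hη : ∀ i, P i → η i * (1 - (1 - r) * c i * s) = r * π i := fun i hi => by
    simp only [η, distributionOfScale, if_pos hi]
    exact div_mul_cancel₀ _ (hden' i hi).ne'
  have hηsum : ∑ i, η i = 1 := (sum_filter _ _).symm.trans hsum
  -- Summing `hη` over `P` gives `s * ∑ η c = 1`.
  have hscale : s * ∑ j, (if P j then η j * c j else 0) = 1 := by
    have hterm : ∀ j, (1 - r) * s * (if P j then η j * c j else 0) =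
        η j - if P j then r * π j else 0 := fun j => by
      by_cases hj : P j
      · simp only [if_pos hj]; linear_combination -hη j hj
      · simp [η, distributionOfScale, hj]
    have hrπ : ∑ j, (if P j then r * π j else 0) = r := by
      rw [← sum_filter, ← mul_sum, hπsum, mul_one]
    have := sum_congr rfl fun j (_ : j ∈ univ) => hterm j
    rw [← mul_sum, sum_sub_distrib, hηsum, hrπ] at this
    have hr : (1 - r) ≠ 0 := by linarith
    apply mul_left_cancel₀ hr
    linear_combination this
  refine ⟨fun i => ?_, hηsum, fun i hi => if_neg hi, fun i hi => ?_⟩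
  · by_cases hi : P i
    · simp only [η, distributionOfScale, if_pos hi]
      exact div_nonneg (mul_nonneg hr0 (hπ i hi)) (hden' i hi).le
    · simp [η, distributionOfScale, hi]
  · rw [div_eq_mul_inv, ← (eq_inv_of_mul_eq_one_left hscale)]
    linear_combination hη i hi

lemma IsStableDistribution.exists_eq_distributionOfScale (hπ : ∀ i, P i → 0 < π i)
    (hc : ∀ i, P i → 0 < c i) (hr0 : 0 < r) {η : ι → ℝ} (hη : IsStableDistribution P π c r η) :
    ∃ s, 0 < s ∧ (∀ i ∈ univ.filter P, (1 - r) * c i * s < 1) ∧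
      η = distributionOfScale P π c r s := by
  obtain ⟨hη0, hη1, hηP, hηfix⟩ := hη
  set L := ∑ j, if P j then η j * c j else 0
  have hL : 0 < L := by
    obtain ⟨j, -, hj⟩ := exists_pos_of_sum_pos (hη1 ▸ one_pos : 0 < ∑ i, η i)
    have hPj : P j := by_contra fun h => hj.ne' (hηP j h)
    refine sum_pos' (fun i _ => ?_)
      ⟨j, mem_univ j, by rw [if_pos hPj]; exact mul_pos hj (hc j hPj)⟩
    split_ifs with hi
    exacts [mul_nonneg (hη0 i) (hc i hi).le, le_rfl]
  have hfix : ∀ i, P i → η i * (1 - (1 - r) * c i * L⁻¹) = r * π i := fun i hi => by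
    linear_combination hηfix i hi
  have hden : ∀ i, P i → 0 < 1 - (1 - r) * c i * L⁻¹ := fun i hi =>
    pos_of_mul_pos_right ((hfix i hi).symm ▸ mul_pos hr0 (hπ i hi)) (hη0 i)
  refine ⟨L⁻¹, inv_pos.2 hL, fun i hi => sub_pos.1 (hden i (mem_filter.1 hi).2),
    funext fun i => ?_⟩
  by_cases hi : P i
  · rw [distributionOfScale, if_pos hi, eq_div_iff (hden i hi).ne', hfix i hi]
  · rw [distributionOfScale, if_neg hi, hηP i hi]

theorem existsUnique_isStableDistribution (hπ : ∀ i, P i → 0 < π i) (hc : ∀ i, P i → 0 < c i)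
    (hπsum : ∑ i with P i, π i = 1) (hr0 : 0 < r) (hr1 : r < 1) :
    ∃! η, IsStableDistribution P π c r η := by
  have hS : (univ.filter P).Nonempty :=
    nonempty_of_sum_ne_zero (by rw [hπsum]; exact one_ne_zero)
  obtain ⟨s, ⟨hs, hden, hsum⟩, huniq⟩ := existsUnique_sum_div_one_sub_mul_eq_one hS
    (w := fun i => r * π i) (b := fun i => (1 - r) * c i)
    (fun i hi => mul_pos hr0 (hπ i (mem_filter.1 hi).2))
    (fun i hi => mul_pos (by linarith) (hc i (mem_filter.1 hi).2))
    (by rw [← mul_sum, hπsum]; linarith)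
  refine ⟨_, isStableDistribution_distributionOfScale
    (fun i hi => (hπ i hi).le) hπsum hr0.le hr1 hden hsum, fun η hη => ?_⟩
  obtain ⟨s', hs', hden', rfl⟩ := hη.exists_eq_distributionOfScale hπ hc hr0
  rw [huniq s' ⟨hs', hden', (sum_filter _ _).trans hη.2.1⟩]

end StableDistribution

set_option linter.unusedSectionVars false

section Recombinator

variable {u : (∀ d, A d) → (∀ d, A d) → ℝ} {x : (∀ d, A d) → ℝ}

lemma glue_self (d : D) (s : A d) (p : ∀ d' : {d' : D // d' ≠ d}, A d') : glue d s p d = s := by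
  rw [glue, dif_pos rfl]

lemma glue_of_ne (d : D) (s : A d) (p : ∀ d' : {d' : D // d' ≠ d}, A d')
    (d' : {d' : D // d' ≠ d}) : glue d s p d'.1 = p d' := by
  rw [glue, dif_neg d'.2]

lemma le_marg (hx : ∀ a, 0 ≤ x a) (d : D) (a : ∀ d, A d) : x a ≤ marg x d (a d) :=
  (if_pos rfl).symm.trans_le <| single_le_sum (f := fun a' => if a' d = a d then x a' else 0)
    (fun a' _ => by split_ifs; exacts [hx a', le_rfl]) (mem_univ a)

lemma sum_marg (x : (∀ d, A d) → ℝ) (d : D) : ∑ t, marg x d t = ∑ a, x a := by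
  simp only [marg]
  rw [sum_comm]
  simp

lemma typePay_pos (hu : ∀ a a', 0 < u a a') (hx : ∀ a, 0 ≤ x a) (hsum : ∑ a, x a = 1)
    (a : ∀ d, A d) : 0 < typePay u x a := by
  obtain ⟨a', -, ha'⟩ := exists_pos_of_sum_pos (hsum ▸ one_pos : 0 < ∑ a, x a)
  exact sum_pos' (fun a' _ => mul_nonneg (hx a') (hu a a').le)
    ⟨a', mem_univ a', mul_pos ha' (hu a a')⟩

lemma meanPay_pos (hu : ∀ a a', 0 < u a a') (hx : ∀ a, 0 ≤ x a) (hsum : ∑ a, x a = 1) :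
    0 < meanPay u x := by
  obtain ⟨a, -, ha⟩ := exists_pos_of_sum_pos (hsum ▸ one_pos : 0 < ∑ a, x a)
  exact sum_pos' (fun a _ => mul_nonneg (hx a) (typePay_pos hu hx hsum a).le)
    ⟨a, mem_univ a, mul_pos ha (typePay_pos hu hx hsum a)⟩

lemma marg_mul_traitPay_div_meanPay_pos (hu : ∀ a a', 0 < u a a') (hx : ∀ a, 0 ≤ x a)
    (hsum : ∑ a, x a = 1) {d : D} {t : A d} (ht : 0 < marg x d t) :
    0 < marg x d t * traitPay u x d t / meanPay u x := by
  obtain ⟨a, -, ha⟩ := exists_pos_of_sum_pos ht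
  have had : a d = t := by by_contra h; simp [h] at ha
  rw [traitPay, mul_div_cancel₀ _ ht.ne']
  refine div_pos (sum_pos' (fun a' _ => ?_) ⟨a, mem_univ a, ?_⟩) (meanPay_pos hu hx hsum)
  · split_ifs
    exacts [mul_nonneg (hx a') (typePay_pos hu hx hsum a').le, le_rfl]
  · simp only [if_pos had] at ha ⊢
    exact mul_pos ha (typePay_pos hu hx hsum a)

/-- An absent type can stay absent only if it receives no recombinant offspring. -/
lemma exists_marg_eq_zero_of_recomb_eq_zero (hu : ∀ a a', 0 < u a a') (hx : ∀ a, 0 ≤ x a)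
    (hsum : ∑ a, x a = 1) {r : ℝ} (hr : r ≠ 0) {a : ∀ d, A d} (hrec : recomb u x r a = 0)
    (hxa : x a = 0) : ∃ d, marg x d (a d) = 0 := by
  simp only [recomb, hxa, mul_zero, zero_mul, zero_div, zero_add, sub_zero] at hrec
  obtain ⟨d, -, hd⟩ := prod_eq_zero_iff.1 ((mul_eq_zero.1 hrec).resolve_left hr)
  refine ⟨d, by_contra fun h => ?_⟩
  exact (marg_mul_traitPay_div_meanPay_pos hu hx hsum
    ((sum_nonneg fun a' _ => by split_ifs; exacts [hx a', le_rfl]).lt_of_ne' h)).ne' hd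

end Recombinator

section Partners

variable {u : (∀ d, A d) → (∀ d, A d) → ℝ} {x : (∀ d, A d) → ℝ} {d : D}

lemma prod_marg_pos (hx : ∀ a, 0 ≤ x a) {p : ∀ d' : {d' : D // d' ≠ d}, A d'}
    (hp : 0 < ∑ s : A d, x (glue d s p)) :
    0 < ∏ d' : {d' : D // d' ≠ d}, marg x d'.1 (p d') := by
  obtain ⟨s, -, hs⟩ := exists_pos_of_sum_pos hp
  exact prod_pos fun d' _ => hs.trans_le (glue_of_ne d s p d' ▸ le_marg hx d'.1 (glue d s p))

lemma prod_marg_eq_zero_of_recomb_eq_zero (hu : ∀ a a', 0 < u a a') (hx : ∀ a, 0 ≤ x a)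
    (hsum : ∑ a, x a = 1) {r : ℝ} (hr : r ≠ 0) (hstat : ∀ a, recomb u x r a = 0)
    {p : ∀ d' : {d' : D // d' ≠ d}, A d'} (hp : ¬ 0 < ∑ s : A d, x (glue d s p)) :
    ∏ d' : {d' : D // d' ≠ d}, marg x d'.1 (p d') = 0 := by
  obtain ⟨s, -, hs⟩ := exists_pos_of_sum_pos ((sum_marg x d).trans hsum ▸ one_pos :
    0 < ∑ t, marg x d t)
  have hxs : x (glue d s p) = 0 := le_antisymm
    ((single_le_sum (f := fun s => x (glue d s p)) (fun s _ => hx _) (mem_univ s)).trans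
      (not_lt.1 hp)) (hx _)
  obtain ⟨d', hd'⟩ := exists_marg_eq_zero_of_recomb_eq_zero hu hx hsum hr (hstat _) hxs
  have hne : d' ≠ d := by
    rintro rfl
    rw [glue_self] at hd'
    exact hs.ne' hd'
  exact prod_eq_zero (mem_univ ⟨d', hne⟩) (glue_of_ne d s p ⟨d', hne⟩ ▸ hd')

lemma sum_prod_marg (hsum : ∑ a, x a = 1) :
    ∑ p : ∀ d' : {d' : D // d' ≠ d}, A d',
      ∏ d' : {d' : D // d' ≠ d}, marg x d'.1 (p d') = 1 := by
  rw [← Fintype.prod_sum (fun (d' : {d' : D // d' ≠ d}) (t : A d') => marg x d'.1 t)]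
  exact prod_eq_one fun d' _ => (sum_marg x d'.1).trans hsum

end Partners

theorem stable_partner_distribution_exists_unique_general
    (u : (∀ d, A d) → (∀ d, A d) → ℝ) (hu : ∀ a a', 0 < u a a')
    (x : (∀ d, A d) → ℝ) (hx : ∀ a, 0 ≤ x a) (hsum : ∑ a, x a = 1)
    (r : ℝ) (hr0 : 0 < r) (hr1 : r < 1)
    (hstat : ∀ a, recomb u x r a = 0)
    (d : D) (t : A d) :
    ∃! η : (∀ d' : {d' : D // d' ≠ d}, A d') → ℝ,
      (∀ p, 0 ≤ η p) ∧ (∑ p, η p = 1) ∧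
      (∀ p, ¬ (0 < ∑ s : A d, x (glue d s p)) → η p = 0) ∧
      (∀ p, 0 < ∑ s : A d, x (glue d s p) →
        η p = (1 - r) * η p * typePay u x (glue d t p) /
            (∑ p', if 0 < ∑ s : A d, x (glue d s p') then
                η p' * typePay u x (glue d t p') else 0)
          + r * ∏ d' : {d' : D // d' ≠ d}, marg x d'.1 (p d')) := by
  have hπsum : ∑ p with 0 < ∑ s : A d, x (glue d s p),
      ∏ d' : {d' : D // d' ≠ d}, marg x d'.1 (p d') = 1 := by
    rw [sum_filter_of_ne fun p _ hp => by_contra fun h => hp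
      (prod_marg_eq_zero_of_recomb_eq_zero hu hx hsum hr0.ne' hstat h)]
    exact sum_prod_marg hsum
  exact existsUnique_isStableDistribution (fun p hp => prod_marg_pos hx hp)
    (fun p _ => typePay_pos hu hx hsum _) hπsum hr0 hr1

/-- the stable partner distribution of an invading trait is
well-defined: Equation (13) has a unique solution in `Δ(supp_{-d}(x))`. -/
theorem stable_partner_distribution_exists_unique
    (u : (∀ d, A d) → (∀ d, A d) → ℝ) (hu : ∀ a a', 0 < u a a')
    (x : (∀ d, A d) → ℝ) (hx : ∀ a, 0 ≤ x a) (hsum : ∑ a, x a = 1)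
    (r : ℝ) (hr0 : 0 < r) (hr1 : r < 1)
    (hstat : ∀ a, recomb u x r a = 0)
    (d : D) (t : A d) (ht : marg x d t = 0) :
    ∃! η : (∀ d' : {d' : D // d' ≠ d}, A d') → ℝ,
      (∀ p, 0 ≤ η p) ∧ (∑ p, η p = 1) ∧
      (∀ p, ¬ (0 < ∑ s : A d, x (glue d s p)) → η p = 0) ∧
      (∀ p, 0 < ∑ s : A d, x (glue d s p) →
        η p = (1 - r) * η p * typePay u x (glue d t p) /
            (∑ p', if 0 < ∑ s : A d, x (glue d s p') then
                η p' * typePay u x (glue d t p') else 0)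
          + r * ∏ d' : {d' : D // d' ≠ d}, marg x d'.1 (p d')) :=
  stable_partner_distribution_exists_unique_general u hu x hx hsum r hr0 hr1 hstat d t
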